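/- Every ST formula is stable in every strict finitistic model: for every strict finitistic model W, every ST formula S, and every node k of W, if k forces ¬¬S then k forces S. -/
import Mathlib


/-- Propositional formulas over a countably infinite set of variables (indexed by ℕ). -/
inductive Fm : Type
  | bot : Fm
  | var : ℕ → Fm
  | and : Fm → Fm → Fm
  | or : Fm → Fm → Fm
  | imp : Fm → Fm → Fm

/-- ¬A abbreviates A → ⊥. -/
def Fm.neg (A : Fm) : Fm := Fm.imp A Fm.bot

/-- ¬¬A. -/
def Fm.dneg (A : Fm) : Fm := (Fm.imp A Fm.bot).imp Fm.bot

/-- A strict finitistic model: a rooted tree (a partial order with minimum whose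
sets of predecessors are linearly ordered), finitely branching, all of whose
branches (chains) are of at most countable length, with an upward-closed valuation
satisfying the finite verification condition and the atomic prevalence condition. -/
structure SFModel where
  K : Type
  le : K → K → Prop
  le_refl : ∀ k, le k k
  le_antisymm : ∀ k l, le k l → le l k → k = l
  le_trans : ∀ k l m, le k l → le l m → le k m
  root : K
  root_le : ∀ k, le root k
  pred_linear : ∀ k l m, le l k → le m k → le l m ∨ le m l
  finitely_branching :
    ∀ k, {l | le k l ∧ k ≠ l ∧ ∀ m, le k m → le m l → m = k ∨ m = l}.Finite
  branches_countable :
    ∀ C : Set K, (∀ x ∈ C, ∀ y ∈ C, le x y ∨ le y x) → C.Countable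
  val : ℕ → Set K
  val_up : ∀ p k l, le k l → k ∈ val p → l ∈ val p
  fin_verif : ∀ k, {p | k ∈ val p}.Finite
  atomic_prev : ∀ p, (∃ k, k ∈ val p) → ∀ l, ∃ l', le l l' ∧ l' ∈ val p

/-- Strict finitistic forcing at a node of a strict finitistic model. -/
def Force (W : SFModel) : W.K → Fm → Prop
  | _, Fm.bot => False
  | k, Fm.var p => k ∈ W.val p
  | k, Fm.and A B => Force W k A ∧ Force W k B
  | k, Fm.or A B => Force W k A ∨ Force W k B
  | k, Fm.imp A B =>
      ∀ k', W.le k k' → Force W k' A → ∃ k'', W.le k' k'' ∧ Force W k'' B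

/-- A is valid in W: every node forces A. -/
def Valid (W : SFModel) (A : Fm) : Prop := ∀ k, Force W k A

/-- A is assertible in W: some node forces A. -/
def Assertible (W : SFModel) (A : Fm) : Prop := ∃ k, Force W k A

/-- A is prevalent in W: above every node some node forces A. -/
def Prevalent (W : SFModel) (A : Fm) : Prop := ∀ k, ∃ k', W.le k k' ∧ Force W k' A

/-- STFm formulas: ⊥ is STFm; A → B is STFm for arbitrary formulas A, B; and STFm formulas
are closed under ∧ and ∨. -/
inductive STFm : Fm → Prop
  | bot : STFm Fm.bot
  | imp (A B : Fm) : STFm (Fm.imp A B)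
  | and {A B : Fm} : STFm A → STFm B → STFm (Fm.and A B)
  | or {A B : Fm} : STFm A → STFm B → STFm (Fm.or A B)

theorem force_mono (W : SFModel) : ∀ (A : Fm) (k l : W.K), W.le k l →
    Force W k A → Force W l A := by
  intro A
  induction A with
  | bot => intro k l _ h; exact h.elim
  | var p => intro k l hkl h; exact W.val_up p k l hkl h
  | and A B ihA ihB =>
      intro k l hkl h; exact ⟨ihA k l hkl h.1, ihB k l hkl h.2⟩
  | or A B ihA ihB =>
      intro k l hkl h
      cases h with
      | inl h => exact Or.inl (ihA k l hkl h)
      | inr h => exact Or.inr (ihB k l hkl h)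
  | imp A B ihA ihB =>
      intro k l hkl h k' hk' hA
      exact h k' (W.le_trans k l k' hkl hk') hA

/-- Prevalence lemma: every assertible formula is prevalent. -/
theorem force_prev (W : SFModel) : ∀ (A : Fm), (∃ l, Force W l A) →
    ∀ k, ∃ k', W.le k k' ∧ Force W k' A := by
  intro A
  induction A with
  | bot => rintro ⟨l, h⟩; exact h.elim
  | var p => intro h k; exact W.atomic_prev p h k
  | and A B ihA ihB =>
      rintro ⟨l, hA, hB⟩ k
      obtain ⟨k1, hk1, hA1⟩ := ihA ⟨l, hA⟩ k
      obtain ⟨k2, hk2, hB2⟩ := ihB ⟨l, hB⟩ k1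
      exact ⟨k2, W.le_trans _ _ _ hk1 hk2, force_mono W A k1 k2 hk2 hA1, hB2⟩
  | or A B ihA ihB =>
      rintro ⟨l, h⟩ k
      cases h with
      | inl h =>
          obtain ⟨k', hk', h'⟩ := ihA ⟨l, h⟩ k
          exact ⟨k', hk', Or.inl h'⟩
      | inr h =>
          obtain ⟨k', hk', h'⟩ := ihB ⟨l, h⟩ k
          exact ⟨k', hk', Or.inr h'⟩
  | imp A B ihA ihB =>
      rintro ⟨l, h⟩ k
      by_cases hB : ∃ m, Force W m B
      · -- B is assertible, hence prevalent, hence A → B is valid.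
        refine ⟨k, W.le_refl k, ?_⟩
        intro k' _ _
        exact ihB hB k'
      · -- B is never forced.
        refine ⟨k, W.le_refl k, ?_⟩
        intro k' _ hA
        exfalso
        obtain ⟨a, ha, haA⟩ := ihA ⟨k', hA⟩ l
        obtain ⟨b, _, hbB⟩ := h a ha haA
        exact hB ⟨b, hbB⟩

/-- Key induction: if an STFm formula is prevalent above `k`, then `k` forces it. -/
theorem st_prev_force (W : SFModel) (S : Fm) (hS : STFm S) :
    ∀ k, (∀ k', W.le k k' → ∃ k'', W.le k' k'' ∧ Force W k'' S) → Force W k S := by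
  induction hS with
  | bot =>
      intro k h
      obtain ⟨k'', _, hb⟩ := h k (W.le_refl k)
      exact hb
  | imp A B =>
      intro k h k' hk' hA
      obtain ⟨m, hm, himp⟩ := h k' hk'
      obtain ⟨n, hn, hB⟩ := himp m (W.le_refl m) (force_mono W A k' m hm hA)
      exact ⟨n, W.le_trans _ _ _ hm hn, hB⟩
  | and hA hB ihA ihB =>
      intro k h
      constructor
      · refine ihA k (fun k' hk' => ?_)
        obtain ⟨k'', hk'', hc⟩ := h k' hk'
        exact ⟨k'', hk'', hc.1⟩
      · refine ihB k (fun k' hk' => ?_)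
        obtain ⟨k'', hk'', hc⟩ := h k' hk'
        exact ⟨k'', hk'', hc.2⟩
  | @or A B hA hB ihA ihB =>
      intro k h
      by_cases hAs : ∃ m, Force W m A
      · exact Or.inl (ihA k (fun k' _ => force_prev W A hAs k'))
      · refine Or.inr (ihB k (fun k' hk' => ?_))
        obtain ⟨k'', hk'', hor⟩ := h k' hk'
        cases hor with
        | inl hA' => exact absurd ⟨k'', hA'⟩ hAs
        | inr hB' => exact ⟨k'', hk'', hB'⟩

/-- every STFm formula is stable in every strict finitistic model:
any node forcing ¬¬S forces S. -/
theorem st_stable (W : SFModel) (S : Fm) (hS : STFm S) :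
    ∀ k, Force W k (Fm.neg (Fm.neg S)) → Force W k S := by
  intro k h
  refine st_prev_force W S hS k (fun k' hk' => ?_)
  by_contra hc
  push_neg at hc
  have hneg : Force W k' (Fm.neg S) := by
    intro m hm hS'
    exact absurd hS' (hc m hm)
  obtain ⟨k'', _, hbot⟩ := h k' hk' hneg
  exact hbot
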